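/- arXiv:2601.04616 — 3 statements merged into one kernel-verified Lean document; each statement's English description precedes it below -/
import Mathlib

section
/- Let ι be a finite index type with decidable equality and E a real vector space. Let w : (ι → E) → (ι → ℝ) be permutation equivariant. Define u : (ι → E) → (ι → ℝ) by u(x)(j) = Σ_{T ⊆ univ \ {j}} w(mask(x, T ∪ {j}))(j), where the sum ranges over all subsets T of the complement of {j} in ι. Then u is permutation equivariant. -/
/-!
Relabelling by `π` maps the subsets of `univ \ {j}` bijectively onto those of `univ \ {π j}`,
and masking commutes with relabelling, so the two sums agree term by term.
-/

/-- The masked feature map: `mask x A i = x i` if `i ∈ A`, and `0` otherwise. -/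
def mask {ι E : Type*} [DecidableEq ι] [Zero E] (x : ι → E) (A : Finset ι) : ι → E :=
  fun i => if i ∈ A then x i else 0

/-- Permutation equivariance of a utility function `w : (ι → E) → (ι → ℝ)`. -/
def PermEquivariant {ι E : Type*} (w : (ι → E) → ι → ℝ) : Prop :=
  ∀ (π : Equiv.Perm ι) (x : ι → E) (j : ι), w (x ∘ π) j = w x (π j)

theorem mask_comp_equiv {α β E : Type*} [DecidableEq α] [DecidableEq β] [Zero E]
    (x : β → E) (e : α ≃ β) (A : Finset α) :
    mask (x ∘ e) A = mask x (A.map e.toEmbedding) ∘ e := by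
  funext i
  simp [mask]

theorem Finset.map_mem_powerset_univ_erase_iff {α β : Type*} [Fintype α] [Fintype β]
    [DecidableEq α] [DecidableEq β] (e : α ≃ β) (a : α) (T : Finset α) :
    T.map e.toEmbedding ∈ (univ.erase (e a)).powerset ↔ T ∈ (univ.erase a).powerset := by
  simp [subset_erase]

theorem sum_masked_permEquivariant_general {ι : Type*} [Fintype ι] [DecidableEq ι]
    {E : Type*} [AddCommGroup E]
    (w : (ι → E) → ι → ℝ) (hw : PermEquivariant w) :
    PermEquivariant (fun (x : ι → E) (j : ι) =>
      ∑ T ∈ ((Finset.univ : Finset ι).erase j).powerset, w (mask x (insert j T)) j) := by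
  intro π x j
  refine Finset.sum_equiv π.finsetCongr
    (fun T => (Finset.map_mem_powerset_univ_erase_iff π j T).symm) (fun T _ => ?_)
  rw [mask_comp_equiv, hw, Equiv.finsetCongr_apply, Finset.map_insert]
  rfl

/-- if `w` is permutation equivariant, then the utility function
`u x j = ∑_{T ⊆ univ \ {j}} w (mask x (T ∪ {j})) j` is permutation equivariant. -/
theorem sum_masked_permEquivariant {ι : Type*} [Fintype ι] [DecidableEq ι]
    {E : Type*} [AddCommGroup E] [Module ℝ E]
    (w : (ι → E) → ι → ℝ) (hw : PermEquivariant w) :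
    PermEquivariant (fun (x : ι → E) (j : ι) =>
      ∑ T ∈ ((Finset.univ : Finset ι).erase j).powerset, w (mask x (insert j T)) j) :=
  sum_masked_permEquivariant_general w hw
end

section
/- Let ι be a type with decidable equality and let u : ι → Finset ι → ℝ assign to each alternative j and each offered set S the utility u(j)(S). For each j and each finite T with j ∉ T define v_j(T) = Σ_{R ⊆ T} (-1)^(|T| - |R|) · u(j)(R ∪ {j}), and for distinct j, k ∉ T define the relative context effect α_{jk}(T) = (v_j(T) + v_j(T ∪ {k})) − (v_k(T) + v_k(T ∪ {j})). Then α_{jk}(T) = Σ_{R ⊆ T} (-1)^(|T| - |R|) · (u(j)(R ∪ {j, k}) − u(k)(R ∪ {j, k})), i.e., the relative context effect is a signed sum of utility differences evaluated only on sets containing both j and k. -/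
/-- Featureless context-effect coefficient
`v_j(T) = ∑_{R ⊆ T} (-1)^(|T|-|R|) u(j)(R ∪ {j})`. -/
noncomputable def vCoef {ι : Type*} [DecidableEq ι]
    (u : ι → Finset ι → ℝ) (j : ι) (T : Finset ι) : ℝ :=
  ∑ R ∈ T.powerset, (-1 : ℝ) ^ (T.card - R.card) * u j (insert j R)

/-- Relative context effect
`α_{jk}(T) = (v_j(T) + v_j(T ∪ {k})) − (v_k(T) + v_k(T ∪ {j}))`. -/
noncomputable def alpha {ι : Type*} [DecidableEq ι]
    (u : ι → Finset ι → ℝ) (j k : ι) (T : Finset ι) : ℝ :=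
  (vCoef u j T + vCoef u j (insert k T)) - (vCoef u k T + vCoef u k (insert j T))

/-!
The coefficient `v_j` is the Möbius transform on the subset lattice of `R ↦ u(j)(R ∪ {j})`.
Splitting the subsets of `T ∪ {k}` according to whether they contain `k`, the transform at
`T ∪ {k}` is the transform of `R ↦ f(R ∪ {k})` at `T` minus the transform of `f` at `T`.
Hence `v_j(T) + v_j(T ∪ {k})` only sees the sets `R ∪ {j, k}`, and likewise for `k`.
-/

namespace Finset

variable {ι M : Type*} [DecidableEq ι] [AddCommGroup M]

def mobiusTransform (f : Finset ι → M) (T : Finset ι) : M :=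
  ∑ R ∈ T.powerset, (-1 : ℤ) ^ (T.card - R.card) • f R

theorem mobiusTransform_insert_add {k : ι} {T : Finset ι} (hk : k ∉ T) (f : Finset ι → M) :
    mobiusTransform f (insert k T) + mobiusTransform f T =
      mobiusTransform (fun R => f (insert k R)) T := by
  have without_k : ∑ R ∈ T.powerset, (-1 : ℤ) ^ ((insert k T).card - R.card) • f R =
      -mobiusTransform f T := by
    rw [mobiusTransform, ← sum_neg_distrib]
    refine sum_congr rfl fun R hR => ?_
    rw [card_insert_of_notMem hk, Nat.succ_sub (card_le_card (mem_powerset.mp hR)), pow_succ,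
      mul_neg_one, neg_smul]
  have with_k : ∀ R ∈ T.powerset,
      (-1 : ℤ) ^ ((insert k T).card - (insert k R).card) • f (insert k R) =
        (-1 : ℤ) ^ (T.card - R.card) • f (insert k R) := fun R hR => by
    rw [card_insert_of_notMem hk, card_insert_of_notMem fun h => hk (mem_powerset.mp hR h),
      Nat.succ_sub_succ]
  rw [mobiusTransform, sum_powerset_insert hk, without_k, sum_congr rfl with_k, mobiusTransform]
  abel

end Finset

open Finset

theorem vCoef_eq_mobiusTransform {ι : Type*} [DecidableEq ι]
    (u : ι → Finset ι → ℝ) (j : ι) (T : Finset ι) :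
    vCoef u j T = mobiusTransform (fun R => u j (insert j R)) T := by
  simp only [vCoef, mobiusTransform, zsmul_eq_mul, Int.cast_pow, Int.cast_neg, Int.cast_one]

theorem vCoef_add_vCoef_insert {ι : Type*} [DecidableEq ι]
    (u : ι → Finset ι → ℝ) (j k : ι) {T : Finset ι} (hk : k ∉ T) :
    vCoef u j T + vCoef u j (insert k T) =
      mobiusTransform (fun R => u j (insert j (insert k R))) T := by
  rw [add_comm, vCoef_eq_mobiusTransform, vCoef_eq_mobiusTransform,
    mobiusTransform_insert_add hk]

theorem alpha_eq_signed_sum_of_differences_general {ι : Type*} [DecidableEq ι]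
    (u : ι → Finset ι → ℝ) (j k : ι)
    (T : Finset ι) (hj : j ∉ T) (hk : k ∉ T) :
    alpha u j k T =
      ∑ R ∈ T.powerset, (-1 : ℝ) ^ (T.card - R.card) *
        (u j (insert j (insert k R)) - u k (insert j (insert k R))) := by
  simp only [alpha, vCoef_add_vCoef_insert u _ _ hk, vCoef_add_vCoef_insert u _ _ hj,
    insert_comm k j, mobiusTransform, zsmul_eq_mul, Int.cast_pow, Int.cast_neg, Int.cast_one,
    ← sum_sub_distrib, mul_sub]

/-- the relative context effect is a signed sum of utility
differences evaluated only on sets containing both `j` and `k`: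
`α_{jk}(T) = ∑_{R ⊆ T} (-1)^(|T|-|R|) (u(j)(R ∪ {j,k}) − u(k)(R ∪ {j,k}))`. -/
theorem alpha_eq_signed_sum_of_differences {ι : Type*} [DecidableEq ι]
    (u : ι → Finset ι → ℝ) (j k : ι) (hjk : j ≠ k)
    (T : Finset ι) (hj : j ∉ T) (hk : k ∉ T) :
    alpha u j k T =
      ∑ R ∈ T.powerset, (-1 : ℝ) ^ (T.card - R.card) *
        (u j (insert j (insert k R)) - u k (insert j (insert k R))) :=
  alpha_eq_signed_sum_of_differences_general u j k T hj hk
end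

section
/- Let ι be a type with decidable equality and let u, u' : ι → Finset ι → ℝ be two utility functions such that there exists c : Finset ι → ℝ with u'(j)(S) = u(j)(S) + c(S) for every finite set S and every j ∈ S (a set-dependent translation, under which the induced softmax choice probabilities coincide). For each utility function define v_j(T) = Σ_{R ⊆ T} (-1)^(|T| - |R|) · u(j)(R ∪ {j}) (respectively with u'), and the relative context effect α_{jk}(T) = (v_j(T) + v_j(T ∪ {k})) − (v_k(T) + v_k(T ∪ {j})) for distinct j, k ∉ T. Then the relative context effects agree: α'_{jk}(T) = α_{jk}(T) for all finite T and all distinct j, k ∉ T. -/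
section

variable {ι : Type*} [DecidableEq ι]

noncomputable def altSum (f : Finset ι → ℝ) (T : Finset ι) : ℝ :=
  ∑ R ∈ T.powerset, (-1 : ℝ) ^ (T.card - R.card) * f R

lemma altSum_insert (f : Finset ι → ℝ) {k : ι} {T : Finset ι} (hk : k ∉ T) :
    altSum f (insert k T) = altSum (fun R => f (insert k R)) T - altSum f T := by
  rw [altSum, Finset.sum_powerset_insert hk, Finset.card_insert_of_notMem hk, add_comm,
    altSum, altSum, sub_eq_add_neg, ← Finset.sum_neg_distrib]
  congr 1 <;> refine Finset.sum_congr rfl fun R hR => ?_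
  · have hkR : k ∉ R := fun hkR => hk (Finset.mem_powerset.mp hR hkR)
    rw [Finset.card_insert_of_notMem hkR, Nat.add_sub_add_right]
  · rw [Nat.sub_add_comm (Finset.card_le_card (Finset.mem_powerset.mp hR)), pow_succ]
    ring

lemma altSum_add_altSum_insert (f : Finset ι → ℝ) {k : ι} {T : Finset ι} (hk : k ∉ T) :
    altSum f T + altSum f (insert k T) = altSum (fun R => f (insert k R)) T := by
  rw [altSum_insert f hk, add_sub_cancel]

variable {u u' : ι → Finset ι → ℝ} {c : Finset ι → ℝ}

lemma vCoef_of_translate (hc : ∀ (S : Finset ι) (j : ι), j ∈ S → u' j S = u j S + c S)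
    (j : ι) (T : Finset ι) :
    vCoef u' j T = vCoef u j T + altSum (fun R => c (insert j R)) T := by
  rw [vCoef, vCoef, altSum, ← Finset.sum_add_distrib]
  refine Finset.sum_congr rfl fun R _ => ?_
  rw [hc _ j (Finset.mem_insert_self j R)]
  ring

lemma vCoef_add_vCoef_insert_of_translate
    (hc : ∀ (S : Finset ι) (j : ι), j ∈ S → u' j S = u j S + c S)
    (j : ι) {k : ι} {T : Finset ι} (hk : k ∉ T) :
    vCoef u' j T + vCoef u' j (insert k T) =
      vCoef u j T + vCoef u j (insert k T) + altSum (fun R => c (insert j (insert k R))) T := by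
  rw [vCoef_of_translate hc, vCoef_of_translate hc,
    ← altSum_add_altSum_insert (fun R => c (insert j R)) hk]
  ring

end

/-- relative context effects are invariant under set-dependent
translations of the utilities: if `u'(j)(S) = u(j)(S) + c(S)` for all `S` and all
`j ∈ S`, then `α'_{jk}(T) = α_{jk}(T)` for all finite `T` and distinct `j, k ∉ T`. -/
theorem alpha_invariant_under_translation {ι : Type*} [DecidableEq ι]
    (u u' : ι → Finset ι → ℝ)
    (h : ∃ c : Finset ι → ℝ, ∀ (S : Finset ι) (j : ι), j ∈ S → u' j S = u j S + c S) :
    ∀ (T : Finset ι) (j k : ι), j ≠ k → j ∉ T → k ∉ T →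
      alpha u' j k T = alpha u j k T := by
  obtain ⟨c, hc⟩ := h
  intro T j k _ hj hk
  rw [alpha, alpha, vCoef_add_vCoef_insert_of_translate hc j hk,
    vCoef_add_vCoef_insert_of_translate hc k hj]
  simp only [Finset.insert_comm k j]
  ring
end
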